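/- w-fault boundedness is compositional under parallel composition: if (S₁, wt₁) is w₁-fault-bounded by (S₂, wt₂) and (S₁', wt₁') is w₂-fault-bounded by (S₂', wt₂'), then the product system (S₁ × S₁', with semantics the pair of semantics being ⊥ iff either component is ⊥, and weight the sum of component weights) is min(w₁,w₂)-fault-bounded by the product system (S₂ × S₂'). -/

import Mathlib

/-- An abstract noisy system: a type of faults, a semantics map sending each fault
to `none` (detected) or a semantic value, a weight function, and a distinguished
zero-weight identity (trivial) fault. -/
structure NoisySystem (α : Type*) where
  Fault : Type*
  sem : Fault → Option α
  wt : Fault → ℕ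
  ident : Fault
  wt_ident : wt ident = 0

/-- `A` is `w`-fault-bounded by `B`: every fault of `A` of weight `< w` is either
detected, or matched by a fault of `B` of at most the same weight with the same
(undetected) semantics. -/
def WFaultBounded {α : Type*} (w : ℕ) (A B : NoisySystem α) : Prop :=
  ∀ F₁ : A.Fault, A.wt F₁ < w →
    A.sem F₁ = none ∨
      ∃ F₂ : B.Fault, B.wt F₂ ≤ A.wt F₁ ∧ B.sem F₂ = A.sem F₁ ∧ A.sem F₁ ≠ none

/-- `A` is fault-bounded by `B`: `A` is `w`-fault-bounded by `B` for every `w`. -/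
def FaultBounded {α : Type*} (A B : NoisySystem α) : Prop :=
  ∀ w : ℕ, WFaultBounded w A B

/-- Parallel composition of noisy systems: faults are pairs, the semantics is the
pair of components (detected iff either component is detected), and weights add. -/
def NoisySystem.prod {α β : Type*} (A : NoisySystem α) (B : NoisySystem β) :
    NoisySystem (α × β) where
  Fault := A.Fault × B.Fault
  sem := fun F => Option.map₂ Prod.mk (A.sem F.1) (B.sem F.2)
  wt := fun F => A.wt F.1 + B.wt F.2
  ident := (A.ident, B.ident)
  wt_ident := by simp only []; rw [A.wt_ident, B.wt_ident]

theorem wFaultBounded_iff {α : Type*} {w : ℕ} {A B : NoisySystem α} :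
    WFaultBounded w A B ↔ ∀ F₁ : A.Fault, A.wt F₁ < w → A.sem F₁ ≠ none →
      ∃ F₂ : B.Fault, B.wt F₂ ≤ A.wt F₁ ∧ B.sem F₂ = A.sem F₁ := by
  refine forall₂_congr fun F₁ _ => ?_
  by_cases h : A.sem F₁ = none <;> simp [h]

theorem NoisySystem.prod_sem_ne_none_iff {α β : Type*} (A : NoisySystem α) (B : NoisySystem β)
    (F : (A.prod B).Fault) :
    (A.prod B).sem F ≠ none ↔ A.sem F.1 ≠ none ∧ B.sem F.2 ≠ none :=
  Option.map₂_eq_none_iff.not.trans not_or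

/-- `w`-fault boundedness is compositional under parallel composition. -/
theorem wFaultBounded_prod {α β : Type*} (w₁ w₂ : ℕ)
    (A₁ A₂ : NoisySystem α) (B₁ B₂ : NoisySystem β)
    (hA : WFaultBounded w₁ A₁ A₂) (hB : WFaultBounded w₂ B₁ B₂) :
    WFaultBounded (min w₁ w₂) (A₁.prod B₁) (A₂.prod B₂) := by
  rw [wFaultBounded_iff] at hA hB ⊢
  rintro ⟨f, g⟩ hw hne
  obtain ⟨hf, hg⟩ := (NoisySystem.prod_sem_ne_none_iff A₁ B₁ (f, g)).mp hne
  have hw_sum : A₁.wt f + B₁.wt g < min w₁ w₂ := hw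
  obtain ⟨f₂, hf₂_wt, hf₂_sem⟩ := hA f (by omega) hf
  obtain ⟨g₂, hg₂_wt, hg₂_sem⟩ := hB g (by omega) hg
  exact ⟨(f₂, g₂), add_le_add hf₂_wt hg₂_wt, congrArg₂ (Option.map₂ Prod.mk) hf₂_sem hg₂_sem⟩
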